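/- Fix the observed data x_1,…,x_n. Define L^(I)(θ) = max{ ∏_{i=1}^n π_i : π_i>0, Σ_{i=1}^n π_i = 1, Σ_{i=1}^n π_i g^(I)(x_i;θ) = 0 } and L^(T)(θ,ξ) = max{ ∏_{i=1}^n π_i : π_i>0, Σ_{i=1}^n π_i = 1, Σ_{i=1}^n π_i g^(I)(x_i;θ) = 0, Σ_{i=1}^n π_i g^(D)(x_i;θ) − ξ = 0 }. Suppose: θ̂^(I) is the UNIQUE maximizer of L^(I) over Θ; (θ̂^(T), ξ̂^(T)) maximizes L^(T) over Θ×Γ; the constrained maxima defining L^(I)(θ̂^(I)), L^(I)(θ̂^(T)) and L^(T)(θ̂^(T), ξ̂^(T)) are attained, with weights π̂^(I) attaining L^(I)(θ̂^(I)); and Γ contains Σ_{i=1}^n π̂^(I)_i g^(D)(x_i; θ̂^(I)). Then θ̂^(T) = θ̂^(I), and L^(I)(θ̂^(T)) = L^(T)(θ̂^(T), ξ̂^(T)) = L^(I)(θ̂^(I)). In particular, the θ-component of the empirical likelihood estimator for the augmented problem with the unpenalized auxiliary parameter ξ coincides with the empirical likelihood estimator using g^(I) alone. -/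

import Mathlib

set_option autoImplicit false

noncomputable section

namespace Paper

/-- the empirical likelihood `L^{(I)}(θ)` based on the moment functions `g^{(I)}` alone -/
def LI {d pp r1 n : ℕ} (gI : (Fin d → ℝ) → (Fin pp → ℝ) → Fin r1 → ℝ)
    (x : Fin n → Fin d → ℝ) (θ : Fin pp → ℝ) : ℝ :=
  sSup {v : ℝ | ∃ π : Fin n → ℝ, (∀ i, 0 < π i) ∧ (∑ i, π i = 1) ∧
    (∀ j, ∑ i, π i * gI (x i) θ j = 0) ∧ v = ∏ i, π i}

/-- the empirical likelihood `L^{(T)}(θ,ξ)` for the augmented parameter, based on the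
stacked moment functions `(g^{(I)}(x;θ)ᵀ, g^{(D)}(x;θ)ᵀ − ξᵀ)ᵀ` -/
def LT {d pp r1 r2 n : ℕ} (gI : (Fin d → ℝ) → (Fin pp → ℝ) → Fin r1 → ℝ)
    (gD : (Fin d → ℝ) → (Fin pp → ℝ) → Fin r2 → ℝ)
    (x : Fin n → Fin d → ℝ) (θ : Fin pp → ℝ) (ξ : Fin r2 → ℝ) : ℝ :=
  sSup {v : ℝ | ∃ π : Fin n → ℝ, (∀ i, 0 < π i) ∧ (∑ i, π i = 1) ∧
    (∀ j, ∑ i, π i * gI (x i) θ j = 0) ∧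
    (∀ k, (∑ i, π i * gD (x i) θ k) - ξ k = 0) ∧ v = ∏ i, π i}

/-!
Dropping the constraints on `g^{(D)}` only enlarges the feasible set, so
`L^{(T)}(θ, ξ) ≤ L^{(I)}(θ)` for every `ξ`, while the weights `π̂^{(I)}` are feasible for the
augmented problem at `(θ̂^{(I)}, ξ̂)` with `ξ̂ = Σ π̂^{(I)}_i g^{(D)}(x_i; θ̂^{(I)}) ∈ Γ`. Hence
`L^{(T)}(θ̂^{(T)}, ξ̂^{(T)}) ≤ L^{(I)}(θ̂^{(T)}) ≤ L^{(I)}(θ̂^{(I)}) ≤ L^{(T)}(θ̂^{(I)}, ξ̂) ≤ L^{(T)}(θ̂^{(T)}, ξ̂^{(T)})`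
is a chain of equalities, and uniqueness of the maximizer of `L^{(I)}` gives `θ̂^{(T)} = θ̂^{(I)}`.
-/

lemma prod_le_one_of_sum_eq_one {ι : Type*} [Fintype ι] {π : ι → ℝ} (hpos : ∀ i, 0 ≤ π i)
    (hsum : ∑ i, π i = 1) : ∏ i, π i ≤ 1 :=
  Finset.prod_le_one (fun i _ => hpos i) fun i _ =>
    hsum ▸ Finset.single_le_sum (fun j _ => hpos j) (Finset.mem_univ i)

lemma bddAbove_of_forall_eq_prod_weights {ι : Type*} [Fintype ι] {s : Set ℝ}
    (hs : ∀ v ∈ s, ∃ π : ι → ℝ, (∀ i, 0 < π i) ∧ ∑ i, π i = 1 ∧ v = ∏ i, π i) :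
    BddAbove s := by
  refine ⟨1, fun v hv => ?_⟩
  obtain ⟨π, hpos, hsum, rfl⟩ := hs v hv
  exact prod_le_one_of_sum_eq_one (fun i => (hpos i).le) hsum

section

variable {d pp r1 r2 n : ℕ} (gI : (Fin d → ℝ) → (Fin pp → ℝ) → Fin r1 → ℝ)
  (gD : (Fin d → ℝ) → (Fin pp → ℝ) → Fin r2 → ℝ) (x : Fin n → Fin d → ℝ)

lemma prod_le_LI {θ : Fin pp → ℝ} {π : Fin n → ℝ} (hpos : ∀ i, 0 < π i)
    (hsum : ∑ i, π i = 1) (hcon : ∀ j, ∑ i, π i * gI (x i) θ j = 0) :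
    ∏ i, π i ≤ LI gI x θ :=
  le_csSup (bddAbove_of_forall_eq_prod_weights fun _ ⟨π, h1, h2, _, hv⟩ => ⟨π, h1, h2, hv⟩)
    ⟨π, hpos, hsum, hcon, rfl⟩

lemma LI_nonneg (θ : Fin pp → ℝ) : 0 ≤ LI gI x θ :=
  Real.sSup_nonneg fun _ ⟨_, hpos, _, _, hv⟩ => hv ▸ Finset.prod_nonneg fun i _ => (hpos i).le

-- `sSup ∅ = 0` on `ℝ`, so the bound also holds when the augmented problem is infeasible.
lemma LT_le_LI (θ : Fin pp → ℝ) (ξ : Fin r2 → ℝ) : LT gI gD x θ ξ ≤ LI gI x θ :=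
  Real.sSup_le (fun _ ⟨_, hpos, hsum, hcon, _, hv⟩ => hv ▸ prod_le_LI gI x hpos hsum hcon)
    (LI_nonneg gI x θ)

lemma prod_le_LT {θ : Fin pp → ℝ} {π : Fin n → ℝ} (hpos : ∀ i, 0 < π i)
    (hsum : ∑ i, π i = 1) (hcon : ∀ j, ∑ i, π i * gI (x i) θ j = 0) :
    ∏ i, π i ≤ LT gI gD x θ (fun k => ∑ i, π i * gD (x i) θ k) :=
  le_csSup
    (bddAbove_of_forall_eq_prod_weights fun _ ⟨π, h1, h2, _, _, hv⟩ => ⟨π, h1, h2, hv⟩)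
    ⟨π, hpos, hsum, hcon, fun _ => sub_self _, rfl⟩

end

theorem statement_3_general {d pp r1 r2 n : ℕ}
    (Θ : Set (Fin pp → ℝ)) (Γ : Set (Fin r2 → ℝ))
    (gI : (Fin d → ℝ) → (Fin pp → ℝ) → Fin r1 → ℝ)
    (gD : (Fin d → ℝ) → (Fin pp → ℝ) → Fin r2 → ℝ)
    (x : Fin n → Fin d → ℝ)
    -- θ̂^{(I)} is the unique maximizer of L^{(I)} over Θ
    (θhatI : Fin pp → ℝ) (hθI_mem : θhatI ∈ Θ)
    (hθI_max : ∀ θ ∈ Θ, LI gI x θ ≤ LI gI x θhatI)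
    (hθI_unique : ∀ θ ∈ Θ, LI gI x θ = LI gI x θhatI → θ = θhatI)
    -- (θ̂^{(T)}, ξ̂^{(T)}) maximizes L^{(T)} over Θ × Γ
    (θhatT : Fin pp → ℝ) (ξhatT : Fin r2 → ℝ)
    (hθT_mem : θhatT ∈ Θ)
    (hT_max : ∀ θ ∈ Θ, ∀ ξ ∈ Γ, LT gI gD x θ ξ ≤ LT gI gD x θhatT ξhatT)
    -- the constrained maximum defining L^{(I)}(θ̂^{(I)}) is attained by the weights π̂^{(I)}
    (πI : Fin n → ℝ) (hπI_pos : ∀ i, 0 < πI i) (hπI_sum : ∑ i, πI i = 1)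
    (hπI_con : ∀ j, ∑ i, πI i * gI (x i) θhatI j = 0)
    (hπI_att : ∏ i, πI i = LI gI x θhatI)
    -- Γ contains the induced value of the auxiliary parameter at (π̂^{(I)}, θ̂^{(I)})
    (hΓ : (fun k => ∑ i, πI i * gD (x i) θhatI k) ∈ Γ) :
    θhatT = θhatI ∧
      LI gI x θhatT = LT gI gD x θhatT ξhatT ∧
      LT gI gD x θhatT ξhatT = LI gI x θhatI := by
  have hT_le_IT := LT_le_LI gI gD x θhatT ξhatT
  have hIT_le_I := hθI_max θhatT hθT_mem
  have hI_le_T : LI gI x θhatI ≤ LT gI gD x θhatT ξhatT :=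
    hπI_att ▸ (prod_le_LT gI gD x hπI_pos hπI_sum hπI_con).trans (hT_max θhatI hθI_mem _ hΓ)
  have hIT_eq_I : LI gI x θhatT = LI gI x θhatI := le_antisymm hIT_le_I (by linarith)
  exact ⟨hθI_unique θhatT hθT_mem hIT_eq_I, by linarith, by linarith⟩

/-- with the auxiliary parameter `ξ` left unpenalized, the θ-component of the
augmented EL estimator coincides with the EL estimator based on `g^{(I)}` alone, and all
three empirical likelihood values agree. -/
theorem statement_3 {d pp r1 r2 n : ℕ}
    (Θ : Set (Fin pp → ℝ)) (Γ : Set (Fin r2 → ℝ))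
    (gI : (Fin d → ℝ) → (Fin pp → ℝ) → Fin r1 → ℝ)
    (gD : (Fin d → ℝ) → (Fin pp → ℝ) → Fin r2 → ℝ)
    (x : Fin n → Fin d → ℝ)
    -- θ̂^{(I)} is the unique maximizer of L^{(I)} over Θ
    (θhatI : Fin pp → ℝ) (hθI_mem : θhatI ∈ Θ)
    (hθI_max : ∀ θ ∈ Θ, LI gI x θ ≤ LI gI x θhatI)
    (hθI_unique : ∀ θ ∈ Θ, LI gI x θ = LI gI x θhatI → θ = θhatI)
    -- (θ̂^{(T)}, ξ̂^{(T)}) maximizes L^{(T)} over Θ × Γ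
    (θhatT : Fin pp → ℝ) (ξhatT : Fin r2 → ℝ)
    (hθT_mem : θhatT ∈ Θ) (hξT_mem : ξhatT ∈ Γ)
    (hT_max : ∀ θ ∈ Θ, ∀ ξ ∈ Γ, LT gI gD x θ ξ ≤ LT gI gD x θhatT ξhatT)
    -- the constrained maximum defining L^{(I)}(θ̂^{(I)}) is attained by the weights π̂^{(I)}
    (πI : Fin n → ℝ) (hπI_pos : ∀ i, 0 < πI i) (hπI_sum : ∑ i, πI i = 1)
    (hπI_con : ∀ j, ∑ i, πI i * gI (x i) θhatI j = 0)
    (hπI_att : ∏ i, πI i = LI gI x θhatI)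
    -- the constrained maximum defining L^{(I)}(θ̂^{(T)}) is attained
    (hattIT : ∃ π : Fin n → ℝ, (∀ i, 0 < π i) ∧ (∑ i, π i = 1) ∧
      (∀ j, ∑ i, π i * gI (x i) θhatT j = 0) ∧ ∏ i, π i = LI gI x θhatT)
    -- the constrained maximum defining L^{(T)}(θ̂^{(T)}, ξ̂^{(T)}) is attained
    (hattT : ∃ π : Fin n → ℝ, (∀ i, 0 < π i) ∧ (∑ i, π i = 1) ∧
      (∀ j, ∑ i, π i * gI (x i) θhatT j = 0) ∧
      (∀ k, (∑ i, π i * gD (x i) θhatT k) - ξhatT k = 0) ∧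
      ∏ i, π i = LT gI gD x θhatT ξhatT)
    -- Γ contains the induced value of the auxiliary parameter at (π̂^{(I)}, θ̂^{(I)})
    (hΓ : (fun k => ∑ i, πI i * gD (x i) θhatI k) ∈ Γ) :
    θhatT = θhatI ∧
      LI gI x θhatT = LT gI gD x θhatT ξhatT ∧
      LT gI gD x θhatT ξhatT = LI gI x θhatI :=
  statement_3_general Θ Γ gI gD x θhatI hθI_mem hθI_max hθI_unique θhatT ξhatT hθT_mem hT_max πI
    hπI_pos hπI_sum hπI_con hπI_att hΓ

end Paper
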